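/- arXiv:1905.01754 — 7 statements merged into one kernel-verified Lean document; each statement's English description precedes it below -/
import Mathlib

section
/- For all y, ȳ ∈ ℝ one has the Lipschitz-type estimate ‖w_h(y) − w_h(ȳ)‖_V ≤ C_P³ |e^y − e^{ȳ}| ‖f‖_H. -/
open RealInnerProductSpace

theorem stmt_2
    {V H : Type*} [NormedAddCommGroup V] [InnerProductSpace ℝ V] [CompleteSpace V]
    [NormedAddCommGroup H] [InnerProductSpace ℝ H] [CompleteSpace H]
    (CP : ℝ) (hCP : 0 < CP)
    (ι : V →L[ℝ] H) (hι : ∀ v : V, ‖ι v‖ ≤ CP * ‖v‖)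
    (f : H)
    (F : V → ℝ) (hF : ∀ v, F v = ⟪f, ι v⟫)
    (a : ℝ → V → V → ℝ)
    (ha : ∀ y w v, a y w v = ⟪w, v⟫ + Real.exp y * ⟪ι w, ι v⟫)
    (Vh : Submodule ℝ V) (hVh : IsClosed (Vh : Set V))
    (wh : ℝ → V) (hwh_mem : ∀ y, wh y ∈ Vh)
    (hwh : ∀ y, ∀ v ∈ Vh, a y (wh y) v = F v)
    (y ybar : ℝ) :
    ‖wh y - wh ybar‖ ≤ CP ^ 3 * |Real.exp y - Real.exp ybar| * ‖f‖ := by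
  set e := wh y - wh ybar with he_def
  have he : e ∈ Vh := Vh.sub_mem (hwh_mem y) (hwh_mem ybar)
  -- key identity
  have key : ⟪e, e⟫ + Real.exp y * ⟪ι e, ι e⟫
      = (Real.exp ybar - Real.exp y) * ⟪ι (wh ybar), ι e⟫ := by
    have h1 := hwh y e he
    have h2 := hwh ybar e he
    rw [ha] at h1 h2
    have h3 : ⟪wh y, e⟫ + Real.exp y * ⟪ι (wh y), ι e⟫
        = ⟪wh ybar, e⟫ + Real.exp ybar * ⟪ι (wh ybar), ι e⟫ := by
      rw [h1, h2]
    simp only [he_def, map_sub, inner_sub_left] at *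
    ring_nf
    ring_nf at h3
    linarith
  -- bound on ‖wh ybar‖
  have hwb : ‖wh ybar‖ ≤ CP * ‖f‖ := by
    have h2 := hwh ybar (wh ybar) (hwh_mem ybar)
    rw [ha, hF] at h2
    have hsq : ‖wh ybar‖ ^ 2 ≤ ⟪f, ι (wh ybar)⟫ := by
      rw [← h2]
      nlinarith [real_inner_self_eq_norm_sq (wh ybar), real_inner_self_nonneg (x := ι (wh ybar)), Real.exp_pos ybar]
    have hb : ⟪f, ι (wh ybar)⟫ ≤ ‖f‖ * (CP * ‖wh ybar‖) := by
      calc ⟪f, ι (wh ybar)⟫ ≤ ‖f‖ * ‖ι (wh ybar)‖ := real_inner_le_norm _ _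
        _ ≤ ‖f‖ * (CP * ‖wh ybar‖) := by
            exact mul_le_mul_of_nonneg_left (hι _) (norm_nonneg f)
    rcases eq_or_lt_of_le (norm_nonneg (wh ybar)) with h0 | h0
    · rw [← h0]; positivity
    · have : ‖wh ybar‖ ^ 2 ≤ ‖f‖ * (CP * ‖wh ybar‖) := le_trans hsq hb
      nlinarith
  -- main estimate
  have hsq : ‖e‖ ^ 2 ≤ |Real.exp y - Real.exp ybar| * (CP * ‖wh ybar‖) * (CP * ‖e‖) := by
    have h1 : ‖e‖ ^ 2 ≤ ⟪e, e⟫ + Real.exp y * ⟪ι e, ι e⟫ := by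
      nlinarith [real_inner_self_eq_norm_sq e, real_inner_self_nonneg (x := ι e), Real.exp_pos y]
    rw [key] at h1
    have h2 : (Real.exp ybar - Real.exp y) * ⟪ι (wh ybar), ι e⟫
        ≤ |Real.exp y - Real.exp ybar| * (‖ι (wh ybar)‖ * ‖ι e‖) := by
      calc (Real.exp ybar - Real.exp y) * ⟪ι (wh ybar), ι e⟫
          ≤ |(Real.exp ybar - Real.exp y) * ⟪ι (wh ybar), ι e⟫| := le_abs_self _
        _ = |Real.exp y - Real.exp ybar| * |⟪ι (wh ybar), ι e⟫| := by
            rw [abs_mul, abs_sub_comm]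
        _ ≤ |Real.exp y - Real.exp ybar| * (‖ι (wh ybar)‖ * ‖ι e‖) :=
            mul_le_mul_of_nonneg_left (abs_real_inner_le_norm _ _) (abs_nonneg _)
    have h3 : ‖ι (wh ybar)‖ * ‖ι e‖ ≤ (CP * ‖wh ybar‖) * (CP * ‖e‖) :=
      mul_le_mul (hι _) (hι _) (norm_nonneg _) (by positivity)
    calc ‖e‖ ^ 2 ≤ |Real.exp y - Real.exp ybar| * (‖ι (wh ybar)‖ * ‖ι e‖) :=
          le_trans h1 h2
      _ ≤ |Real.exp y - Real.exp ybar| * ((CP * ‖wh ybar‖) * (CP * ‖e‖)) :=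
          mul_le_mul_of_nonneg_left h3 (abs_nonneg _)
      _ = |Real.exp y - Real.exp ybar| * (CP * ‖wh ybar‖) * (CP * ‖e‖) := by ring
  rcases eq_or_lt_of_le (norm_nonneg e) with h0 | h0
  · rw [← h0]; positivity
  · have h4 : ‖e‖ ≤ CP ^ 2 * |Real.exp y - Real.exp ybar| * ‖wh ybar‖ := by
      nlinarith [abs_nonneg (Real.exp y - Real.exp ybar)]
    calc ‖e‖ ≤ CP ^ 2 * |Real.exp y - Real.exp ybar| * ‖wh ybar‖ := h4
      _ ≤ CP ^ 2 * |Real.exp y - Real.exp ybar| * (CP * ‖f‖) := by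
          apply mul_le_mul_of_nonneg_left hwb; positivity
      _ = CP ^ 3 * |Real.exp y - Real.exp ybar| * ‖f‖ := by ring
end

section
/- For all y, ȳ ∈ ℝ one has ‖ι(w_h(y) − w_h(ȳ))‖_H ≤ e^{−y} |e^{y−ȳ} − 1| ‖f‖_H. -/
open RealInnerProductSpace

theorem stmt_3
    {V H : Type*} [NormedAddCommGroup V] [InnerProductSpace ℝ V] [CompleteSpace V]
    [NormedAddCommGroup H] [InnerProductSpace ℝ H] [CompleteSpace H]
    (CP : ℝ) (hCP : 0 < CP)
    (ι : V →L[ℝ] H) (hι : ∀ v : V, ‖ι v‖ ≤ CP * ‖v‖)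
    (f : H)
    (F : V → ℝ) (hF : ∀ v, F v = ⟪f, ι v⟫)
    (a : ℝ → V → V → ℝ)
    (ha : ∀ y w v, a y w v = ⟪w, v⟫ + Real.exp y * ⟪ι w, ι v⟫)
    (Vh : Submodule ℝ V) (hVh : IsClosed (Vh : Set V))
    (wh : ℝ → V) (hwh_mem : ∀ y, wh y ∈ Vh)
    (hwh : ∀ y, ∀ v ∈ Vh, a y (wh y) v = F v)
    (y ybar : ℝ) :
    ‖ι (wh y - wh ybar)‖ ≤ Real.exp (-y) * |Real.exp (y - ybar) - 1| * ‖f‖ := by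
  set A := ‖ι (wh y - wh ybar)‖ with hAdef
  set B := ‖ι (wh ybar)‖ with hBdef
  set d := |Real.exp ybar - Real.exp y| with hddef
  -- stability bound for wh ybar
  have key1 : Real.exp ybar * B ^ 2 ≤ ‖f‖ * B := by
    have h := hwh ybar (wh ybar) (hwh_mem ybar)
    rw [ha, hF] at h
    have h1 : ⟪ι (wh ybar), ι (wh ybar)⟫ = B ^ 2 := by
      rw [real_inner_self_eq_norm_sq]
    have h2 : (0:ℝ) ≤ ⟪wh ybar, wh ybar⟫ := real_inner_self_nonneg
    have h3 := real_inner_le_norm f (ι (wh ybar))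
    rw [← hBdef] at h3
    rw [h1] at h
    nlinarith [h, h2, h3]
  have hB : Real.exp ybar * B ≤ ‖f‖ := by
    rcases eq_or_lt_of_le (norm_nonneg (ι (wh ybar))) with h0 | h0
    · rw [hBdef, ← h0]
      simpa using norm_nonneg f
    · nlinarith [key1, h0]
  -- error equation tested with the error
  have key2 : Real.exp y * A ^ 2 ≤ d * B * A := by
    have he : wh y - wh ybar ∈ Vh := Vh.sub_mem (hwh_mem y) (hwh_mem ybar)
    have h1 := hwh y _ he
    have h2 := hwh ybar _ he
    rw [ha] at h1 h2
    have heq : ⟪wh y - wh ybar, wh y - wh ybar⟫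
        + Real.exp y * ⟪ι (wh y - wh ybar), ι (wh y - wh ybar)⟫
        = (Real.exp ybar - Real.exp y) * ⟪ι (wh ybar), ι (wh y - wh ybar)⟫ := by
      have e1 : ⟪wh y, wh y - wh ybar⟫ - ⟪wh ybar, wh y - wh ybar⟫
          = ⟪wh y - wh ybar, wh y - wh ybar⟫ := by
        rw [inner_sub_left]
      have e2 : ⟪ι (wh y), ι (wh y - wh ybar)⟫ - ⟪ι (wh ybar), ι (wh y - wh ybar)⟫
          = ⟪ι (wh y - wh ybar), ι (wh y - wh ybar)⟫ := by
        rw [map_sub, inner_sub_left]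
      linear_combination h1 - h2 - e1 - Real.exp y * e2
    have h1' : ⟪ι (wh y - wh ybar), ι (wh y - wh ybar)⟫ = A ^ 2 := by
      rw [real_inner_self_eq_norm_sq]
    have h2' : (0:ℝ) ≤ ⟪wh y - wh ybar, wh y - wh ybar⟫ := real_inner_self_nonneg
    have h3 := abs_real_inner_le_norm (ι (wh ybar)) (ι (wh y - wh ybar))
    have h4 : (Real.exp ybar - Real.exp y) * ⟪ι (wh ybar), ι (wh y - wh ybar)⟫
        ≤ d * (B * A) := by
      calc (Real.exp ybar - Real.exp y) * ⟪ι (wh ybar), ι (wh y - wh ybar)⟫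
          ≤ |(Real.exp ybar - Real.exp y) * ⟪ι (wh ybar), ι (wh y - wh ybar)⟫| :=
            le_abs_self _
        _ = d * |⟪ι (wh ybar), ι (wh y - wh ybar)⟫| := by rw [abs_mul]
        _ ≤ d * (B * A) := by
            apply mul_le_mul_of_nonneg_left h3 (abs_nonneg _)
    rw [h1'] at heq
    linarith [heq, h2', h4]
  have habs : Real.exp (-ybar) * d = |Real.exp (y - ybar) - 1| := by
    rw [hddef, abs_sub_comm (Real.exp (y - ybar)) 1,
      ← abs_of_pos (Real.exp_pos (-ybar)), ← abs_mul]
    congr 1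
    rw [mul_sub, ← Real.exp_add, ← Real.exp_add]
    ring_nf
    simp
  rw [← habs]
  rcases eq_or_lt_of_le (norm_nonneg (ι (wh y - wh ybar))) with hA | hA
  · rw [hAdef, ← hA]
    positivity
  · have hA2 : Real.exp y * A ≤ d * B := by nlinarith [key2, hA]
    have h5 : Real.exp y * Real.exp ybar * A ≤ d * ‖f‖ := by
      have := mul_le_mul_of_nonneg_left hA2 (Real.exp_pos ybar).le
      have := mul_le_mul_of_nonneg_left hB (abs_nonneg (Real.exp ybar - Real.exp y))
      nlinarith
    calc A = (Real.exp y)⁻¹ * (Real.exp ybar)⁻¹ * (Real.exp y * Real.exp ybar * A) := by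
          field_simp
      _ ≤ (Real.exp y)⁻¹ * (Real.exp ybar)⁻¹ * (d * ‖f‖) := by
          apply mul_le_mul_of_nonneg_left h5
          positivity
      _ = Real.exp (-y) * (Real.exp (-ybar) * d) * ‖f‖ := by
          rw [Real.exp_neg, Real.exp_neg]; ring
end

section
/- For all y, ȳ ∈ ℝ one has ‖w_h(y) − w_h(ȳ)‖_V ≤ (1/2) e^{−y/2} |e^{y−ȳ} − 1| ‖f‖_H. -/
/-!
Testing the two Galerkin equations with the difference `e = w_h(y) - w_h(ȳ)` gives
`‖e‖² + e^y ‖ι e‖² = (e^ȳ - e^y) ⟪ι w_h(ȳ), ι e⟫`. Bounding the right side by Cauchy–Schwarz and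
absorbing `‖ι e‖` into the left side (AM–GM) leaves `2 e^{y/2} ‖e‖ ≤ |e^ȳ - e^y| ‖ι w_h(ȳ)‖`,
and the stability estimate `e^ȳ ‖ι w_h(ȳ)‖ ≤ ‖f‖` finishes the proof.
-/

open RealInnerProductSpace

lemma le_div_two_sqrt_of_sq_add_mul_sq_le {x s k b : ℝ} (hk : 0 < k) (hb : 0 ≤ b)
    (h : x ^ 2 + k * s ^ 2 ≤ b * s) : x ≤ b / (2 * √k) := by
  have hsq : (2 * √k * x) ^ 2 ≤ b ^ 2 := by
    rw [mul_pow, mul_pow, Real.sq_sqrt hk.le]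
    nlinarith [sq_nonneg (2 * k * s - b)]
  rw [le_div_iff₀ (by positivity), mul_comm]
  exact (abs_le_of_sq_le_sq' hsq hb).2

section Galerkin

variable {V H : Type*} [NormedAddCommGroup V] [InnerProductSpace ℝ V]
  [NormedAddCommGroup H] [InnerProductSpace ℝ H]
  (ι : V →ₗ[ℝ] H) (S : Submodule ℝ V) (f : H) (k : ℝ) (w : V)

def IsGalerkinSolution : Prop :=
  w ∈ S ∧ ∀ v ∈ S, ⟪w, v⟫ + k * ⟪ι w, ι v⟫ = ⟪f, ι v⟫

variable {ι S f k w}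

lemma IsGalerkinSolution.norm_apply_le (hk : 0 < k) (hw : IsGalerkinSolution ι S f k w) :
    ‖ι w‖ ≤ ‖f‖ / k := by
  have henergy := hw.2 w hw.1
  rw [real_inner_self_eq_norm_sq, real_inner_self_eq_norm_sq] at henergy
  have hquad : ‖ι w‖ * k * ‖ι w‖ ≤ ‖f‖ * ‖ι w‖ := by
    nlinarith [real_inner_le_norm f (ι w), sq_nonneg ‖w‖]
  rw [le_div_iff₀ hk]
  rcases (norm_nonneg (ι w)).eq_or_lt with h0 | h0
  · rw [← h0, zero_mul]
    exact norm_nonneg f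
  · exact le_of_mul_le_mul_right hquad h0

lemma IsGalerkinSolution.norm_sub_sq_add_eq {k₁ k₂ : ℝ} {w₁ w₂ : V}
    (h₁ : IsGalerkinSolution ι S f k₁ w₁) (h₂ : IsGalerkinSolution ι S f k₂ w₂) :
    ‖w₁ - w₂‖ ^ 2 + k₁ * ‖ι (w₁ - w₂)‖ ^ 2 = (k₂ - k₁) * ⟪ι w₂, ι (w₁ - w₂)⟫ := by
  have hmem := S.sub_mem h₁.1 h₂.1
  have hdiff := (h₁.2 _ hmem).trans (h₂.2 _ hmem).symm
  rw [← real_inner_self_eq_norm_sq, ← real_inner_self_eq_norm_sq]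
  simp only [map_sub, inner_sub_left] at hdiff ⊢
  linear_combination hdiff

theorem IsGalerkinSolution.norm_sub_le {k₁ k₂ : ℝ} {w₁ w₂ : V} (hk₁ : 0 < k₁) (hk₂ : 0 < k₂)
    (h₁ : IsGalerkinSolution ι S f k₁ w₁) (h₂ : IsGalerkinSolution ι S f k₂ w₂) :
    ‖w₁ - w₂‖ ≤ |k₂ - k₁| * (‖f‖ / k₂) / (2 * √k₁) := by
  refine le_div_two_sqrt_of_sq_add_mul_sq_le hk₁ (by positivity) (s := ‖ι (w₁ - w₂)‖) ?_
  rw [h₁.norm_sub_sq_add_eq h₂]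
  calc (k₂ - k₁) * ⟪ι w₂, ι (w₁ - w₂)⟫
      ≤ |k₂ - k₁| * |⟪ι w₂, ι (w₁ - w₂)⟫| := by rw [← abs_mul]; exact le_abs_self _
    _ ≤ |k₂ - k₁| * (‖ι w₂‖ * ‖ι (w₁ - w₂)‖) := by gcongr; exact abs_real_inner_le_norm _ _
    _ ≤ |k₂ - k₁| * (‖f‖ / k₂) * ‖ι (w₁ - w₂)‖ := by
      rw [← mul_assoc]; gcongr; exact h₂.norm_apply_le hk₂

end Galerkin

lemma abs_exp_sub_exp_div_two_sqrt (y ybar c : ℝ) :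
    |Real.exp ybar - Real.exp y| * (c / Real.exp ybar) / (2 * √(Real.exp y))
      = 1 / 2 * Real.exp (-y / 2) * |Real.exp (y - ybar) - 1| * c := by
  have habs : |Real.exp ybar - Real.exp y| = Real.exp ybar * |Real.exp (y - ybar) - 1| := by
    rw [← abs_of_pos (Real.exp_pos ybar), ← abs_mul, abs_sub_comm, abs_of_pos (Real.exp_pos ybar),
      Real.exp_sub]
    congr 1
    field_simp
  rw [habs, ← Real.exp_half, neg_div, Real.exp_neg]
  field_simp

theorem stmt_4_general
    {V H : Type*} [NormedAddCommGroup V] [InnerProductSpace ℝ V]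
    [NormedAddCommGroup H] [InnerProductSpace ℝ H]
    (ι : V →L[ℝ] H)
    (f : H)
    (F : V → ℝ) (hF : ∀ v, F v = ⟪f, ι v⟫)
    (a : ℝ → V → V → ℝ)
    (ha : ∀ y w v, a y w v = ⟪w, v⟫ + Real.exp y * ⟪ι w, ι v⟫)
    (Vh : Submodule ℝ V)
    (wh : ℝ → V) (hwh_mem : ∀ y, wh y ∈ Vh)
    (hwh : ∀ y, ∀ v ∈ Vh, a y (wh y) v = F v)
    (y ybar : ℝ) :
    ‖wh y - wh ybar‖ ≤ (1 / 2) * Real.exp (-y / 2) * |Real.exp (y - ybar) - 1| * ‖f‖ := by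
  have hsol : ∀ t, IsGalerkinSolution (ι : V →ₗ[ℝ] H) Vh f (Real.exp t) (wh t) := fun t =>
    ⟨hwh_mem t, fun v hv => by simpa only [ha, hF, ContinuousLinearMap.coe_coe] using hwh t v hv⟩
  rw [← abs_exp_sub_exp_div_two_sqrt]
  exact (hsol y).norm_sub_le (Real.exp_pos y) (Real.exp_pos ybar) (hsol ybar)

theorem stmt_4
    {V H : Type*} [NormedAddCommGroup V] [InnerProductSpace ℝ V] [CompleteSpace V]
    [NormedAddCommGroup H] [InnerProductSpace ℝ H] [CompleteSpace H]
    (CP : ℝ) (hCP : 0 < CP)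
    (ι : V →L[ℝ] H) (hι : ∀ v : V, ‖ι v‖ ≤ CP * ‖v‖)
    (f : H)
    (F : V → ℝ) (hF : ∀ v, F v = ⟪f, ι v⟫)
    (a : ℝ → V → V → ℝ)
    (ha : ∀ y w v, a y w v = ⟪w, v⟫ + Real.exp y * ⟪ι w, ι v⟫)
    (Vh : Submodule ℝ V) (hVh : IsClosed (Vh : Set V))
    (wh : ℝ → V) (hwh_mem : ∀ y, wh y ∈ Vh)
    (hwh : ∀ y, ∀ v ∈ Vh, a y (wh y) v = F v)
    (y ybar : ℝ) :
    ‖wh y - wh ybar‖ ≤ (1 / 2) * Real.exp (-y / 2) * |Real.exp (y - ybar) - 1| * ‖f‖ :=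
  stmt_4_general ι f F hF a ha Vh wh hwh_mem hwh y ybar
end

section
/- For all y, ȳ ∈ ℝ the difference of discrete solutions satisfies the energy estimate ‖w_h(y) − w_h(ȳ)‖_V² + e^y ‖ι(w_h(y) − w_h(ȳ))‖_H² ≤ |e^{ȳ} − e^y| · ‖ι w_h(ȳ)‖_H · ‖ι(w_h(y) − w_h(ȳ))‖_H. -/
open RealInnerProductSpace

theorem stmt_5
    {V H : Type*} [NormedAddCommGroup V] [InnerProductSpace ℝ V] [CompleteSpace V]
    [NormedAddCommGroup H] [InnerProductSpace ℝ H] [CompleteSpace H]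
    (CP : ℝ) (hCP : 0 < CP)
    (ι : V →L[ℝ] H) (hι : ∀ v : V, ‖ι v‖ ≤ CP * ‖v‖)
    (f : H)
    (F : V → ℝ) (hF : ∀ v, F v = ⟪f, ι v⟫)
    (a : ℝ → V → V → ℝ)
    (ha : ∀ y w v, a y w v = ⟪w, v⟫ + Real.exp y * ⟪ι w, ι v⟫)
    (Vh : Submodule ℝ V) (hVh : IsClosed (Vh : Set V))
    (wh : ℝ → V) (hwh_mem : ∀ y, wh y ∈ Vh)
    (hwh : ∀ y, ∀ v ∈ Vh, a y (wh y) v = F v)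
    (y ybar : ℝ) :
    ‖wh y - wh ybar‖ ^ 2 + Real.exp y * ‖ι (wh y - wh ybar)‖ ^ 2 ≤
      |Real.exp ybar - Real.exp y| * ‖ι (wh ybar)‖ * ‖ι (wh y - wh ybar)‖ := by
  set e := wh y - wh ybar with he
  have hem : e ∈ Vh := Vh.sub_mem (hwh_mem y) (hwh_mem ybar)
  have h1 := hwh y e hem
  have h2 := hwh ybar e hem
  rw [ha] at h1 h2
  have key : ‖e‖ ^ 2 + Real.exp y * ‖ι e‖ ^ 2
      = (Real.exp ybar - Real.exp y) * ⟪ι (wh ybar), ι e⟫ := by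
    have hsub : (⟪wh y, e⟫ + Real.exp y * ⟪ι (wh y), ι e⟫)
        - (⟪wh ybar, e⟫ + Real.exp ybar * ⟪ι (wh ybar), ι e⟫) = 0 := by
      rw [h1, h2]; ring
    have hinner : ⟪wh y, e⟫ - ⟪wh ybar, e⟫ = ⟪e, e⟫ := by
      rw [← inner_sub_left]
    have hiota : ι (wh y) - ι (wh ybar) = ι e := by simp [he]
    have hinner2 : ⟪ι (wh y), ι e⟫ - ⟪ι (wh ybar), ι e⟫ = ⟪ι e, ι e⟫ := by
      rw [← inner_sub_left, hiota]
    rw [real_inner_self_eq_norm_sq] at hinner hinner2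
    have h3 : ⟪ι (wh y), ι e⟫ = ‖ι e‖ ^ 2 + ⟪ι (wh ybar), ι e⟫ := by
      linarith
    linear_combination hsub - hinner - Real.exp y * h3
  rw [key]
  calc (Real.exp ybar - Real.exp y) * ⟪ι (wh ybar), ι e⟫
      ≤ |Real.exp ybar - Real.exp y| * |⟪ι (wh ybar), ι e⟫| := by
        rw [← abs_mul]; exact le_abs_self _
    _ ≤ |Real.exp ybar - Real.exp y| * (‖ι (wh ybar)‖ * ‖ι e‖) := by
        gcongr
        exact abs_real_inner_le_norm _ _
    _ = |Real.exp ybar - Real.exp y| * ‖ι (wh ybar)‖ * ‖ι e‖ := by ring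
end

section
/- For every y ∈ ℝ the Galerkin error and the residual dual norm are equivalent: (1 + C_P² e^y)^{−1} ‖r(·; y)‖_{V_h'} ≤ W(y) ≤ ‖r(·; y)‖_{V_h'}, where W(y) := ‖w_h(y) − P_W w_h(y)‖_V. -/
open RealInnerProductSpace

theorem stmt_6
    {V H : Type*} [NormedAddCommGroup V] [InnerProductSpace ℝ V] [CompleteSpace V]
    [NormedAddCommGroup H] [InnerProductSpace ℝ H] [CompleteSpace H]
    (CP : ℝ) (hCP : 0 < CP)
    (ι : V →L[ℝ] H) (hι : ∀ v : V, ‖ι v‖ ≤ CP * ‖v‖)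
    (f : H)
    (F : V → ℝ) (hF : ∀ v, F v = ⟪f, ι v⟫)
    (a : ℝ → V → V → ℝ)
    (ha : ∀ y w v, a y w v = ⟪w, v⟫ + Real.exp y * ⟪ι w, ι v⟫)
    (Vh : Submodule ℝ V) (hVh : IsClosed (Vh : Set V))
    (wh : ℝ → V) (hwh_mem : ∀ y, wh y ∈ Vh)
    (hwh : ∀ y, ∀ v ∈ Vh, a y (wh y) v = F v)
    (W : Submodule ℝ V) (hWVh : W ≤ Vh) (hW : IsClosed (W : Set V))
    (P : ℝ → V) (hP_mem : ∀ y, P y ∈ W)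
    (hP : ∀ y, ∀ v ∈ W, a y (P y) v = a y (wh y) v)
    (R : ℝ → ℝ)
    (hR : ∀ y, IsLUB {t : ℝ | ∃ v ∈ Vh, v ≠ 0 ∧ t = (F v - a y (P y) v) / ‖v‖} (R y))
    (y : ℝ) :
    (1 + CP ^ 2 * Real.exp y)⁻¹ * R y ≤ ‖wh y - P y‖ ∧ ‖wh y - P y‖ ≤ R y := by

  set e := wh y - P y with he
  have heVh : e ∈ Vh := Vh.sub_mem (hwh_mem y) (hWVh (hP_mem y))
  have key : ∀ v ∈ Vh, F v - a y (P y) v = ⟪e, v⟫ + Real.exp y * ⟪ι e, ι v⟫ := by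
    intro v hv
    rw [← hwh y v hv, ha, ha, he]
    simp only [inner_sub_left, map_sub]
    ring
  have hpos : (0:ℝ) < 1 + CP ^ 2 * Real.exp y := by positivity
  constructor
  · have hub : (1 + CP ^ 2 * Real.exp y) * ‖e‖ ∈
        upperBounds {t : ℝ | ∃ v ∈ Vh, v ≠ 0 ∧ t = (F v - a y (P y) v) / ‖v‖} := by
      rintro t ⟨v, hv, hv0, rfl⟩
      have hvpos : (0:ℝ) < ‖v‖ := norm_pos_iff.mpr hv0
      rw [key v hv, div_le_iff₀ hvpos]
      have h1 : ⟪e, v⟫ ≤ ‖e‖ * ‖v‖ := real_inner_le_norm e v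
      have h2 : ⟪ι e, ι v⟫ ≤ ‖ι e‖ * ‖ι v‖ := real_inner_le_norm _ _
      have h3 : ‖ι e‖ ≤ CP * ‖e‖ := hι e
      have h4 : ‖ι v‖ ≤ CP * ‖v‖ := hι v
      have hexp := Real.exp_pos y
      have h5 : ‖ι e‖ * ‖ι v‖ ≤ (CP * ‖e‖) * (CP * ‖v‖) :=
        mul_le_mul h3 h4 (norm_nonneg _) (by positivity)
      have h6 : Real.exp y * ⟪ι e, ι v⟫ ≤ Real.exp y * ((CP * ‖e‖) * (CP * ‖v‖)) :=
        mul_le_mul_of_nonneg_left (h2.trans h5) hexp.le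
      nlinarith [norm_nonneg e, norm_nonneg v]
    have h1 : R y ≤ (1 + CP ^ 2 * Real.exp y) * ‖e‖ := (hR y).2 hub
    calc (1 + CP ^ 2 * Real.exp y)⁻¹ * R y
        ≤ (1 + CP ^ 2 * Real.exp y)⁻¹ * ((1 + CP ^ 2 * Real.exp y) * ‖e‖) := by
          exact mul_le_mul_of_nonneg_left h1 (by positivity)
      _ = ‖e‖ := by field_simp
  · by_cases hz : e = 0
    · rw [hz, norm_zero]
      by_cases hex : ∃ v ∈ Vh, v ≠ (0:V)
      · obtain ⟨v, hv, hv0⟩ := hex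
        refine (hR y).1 ⟨v, hv, hv0, ?_⟩
        rw [key v hv, hz]
        simp
      · exfalso
        have h1 : R y ≤ R y - 1 := by
          refine (hR y).2 ?_
          rintro t ⟨v, hv, hv0, rfl⟩
          exact absurd ⟨v, hv, hv0⟩ hex
        linarith
    · have hnpos : (0:ℝ) < ‖e‖ := norm_pos_iff.mpr hz
      have ht : ‖e‖ ≤ (F e - a y (P y) e) / ‖e‖ := by
        rw [key e heVh, le_div_iff₀ hnpos]
        have h1 : ⟪e, e⟫ = ‖e‖ ^ 2 := real_inner_self_eq_norm_sq e
        have h2 : (0:ℝ) ≤ ⟪ι e, ι e⟫ := real_inner_self_nonneg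
        nlinarith [Real.exp_pos y]
      exact le_trans ht ((hR y).1 ⟨e, heVh, hz, rfl⟩)
end

section
/- Let D = [p, q] be a compact interval of parameters. If y* ∈ D maximizes the residual dual norm over D, i.e. ‖r(·; y*)‖_{V_h'} ≥ ‖r(·; y)‖_{V_h'} for all y ∈ D, then the Galerkin error at y* satisfies the weak greedy inequality W(y*) ≥ γ · sup_{y ∈ D} W(y) with constant γ := (1 + C_P² e^{q})^{−1}, where W(y) := ‖w_h(y) − P_W w_h(y)‖_V. -/
open RealInnerProductSpace

theorem stmt_7
    {V H : Type*} [NormedAddCommGroup V] [InnerProductSpace ℝ V] [CompleteSpace V]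
    [NormedAddCommGroup H] [InnerProductSpace ℝ H] [CompleteSpace H]
    (CP : ℝ) (hCP : 0 < CP)
    (ι : V →L[ℝ] H) (hι : ∀ v : V, ‖ι v‖ ≤ CP * ‖v‖)
    (f : H)
    (F : V → ℝ) (hF : ∀ v, F v = ⟪f, ι v⟫)
    (a : ℝ → V → V → ℝ)
    (ha : ∀ y w v, a y w v = ⟪w, v⟫ + Real.exp y * ⟪ι w, ι v⟫)
    (Vh : Submodule ℝ V) (hVh : IsClosed (Vh : Set V))
    (wh : ℝ → V) (hwh_mem : ∀ y, wh y ∈ Vh)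
    (hwh : ∀ y, ∀ v ∈ Vh, a y (wh y) v = F v)
    (W : Submodule ℝ V) (hWVh : W ≤ Vh) (hW : IsClosed (W : Set V))
    (P : ℝ → V) (hP_mem : ∀ y, P y ∈ W)
    (hP : ∀ y, ∀ v ∈ W, a y (P y) v = a y (wh y) v)
    (R : ℝ → ℝ)
    (hR : ∀ y, IsLUB {t : ℝ | ∃ v ∈ Vh, v ≠ 0 ∧ t = (F v - a y (P y) v) / ‖v‖} (R y))
    (p q : ℝ) (ystar : ℝ) (hystar : ystar ∈ Set.Icc p q)
    (hmax : ∀ y ∈ Set.Icc p q, R y ≤ R ystar) :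
    ∀ y ∈ Set.Icc p q,
      (1 + CP ^ 2 * Real.exp q)⁻¹ * ‖wh y - P y‖ ≤ ‖wh ystar - P ystar‖ := by
  intro y hy
  have hmem : ∀ z, wh z - P z ∈ Vh := fun z => Vh.sub_mem (hwh_mem z) (hWVh (hP_mem z))
  -- residual identity: for v ∈ Vh, F v - a z (P z) v = a z (e z) v
  have hres : ∀ z : ℝ, ∀ v ∈ Vh,
      F v - a z (P z) v = ⟪wh z - P z, v⟫ + Real.exp z * ⟪ι (wh z - P z), ι v⟫ := by
    intro z v hv
    rw [← hwh z v hv, ha, ha, map_sub, inner_sub_left, inner_sub_left]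
    ring
  -- Nonnegativity of R
  have hRnonneg : ∀ z : ℝ, 0 ≤ R z := by
    intro z
    have hne : {t : ℝ | ∃ v ∈ Vh, v ≠ 0 ∧ t = (F v - a z (P z) v) / ‖v‖}.Nonempty := by
      by_contra hcon
      rw [Set.not_nonempty_iff_eq_empty] at hcon
      have hub : R z - 1 ∈ upperBounds {t : ℝ | ∃ v ∈ Vh, v ≠ 0 ∧ t = (F v - a z (P z) v) / ‖v‖} := by
        rw [hcon]; intro x hx; exact absurd hx (Set.notMem_empty x)
      have := (hR z).2 hub
      linarith
    obtain ⟨t, v, hv, hv0, ht⟩ := hne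
    have h1 : t ≤ R z := (hR z).1 ⟨v, hv, hv0, ht⟩
    have h2 : -t ≤ R z := by
      refine (hR z).1 ⟨-v, Vh.neg_mem hv, neg_ne_zero.mpr hv0, ?_⟩
      have : F (-v) - a z (P z) (-v) = -(F v - a z (P z) v) := by
        rw [hres z v hv, hres z (-v) (Vh.neg_mem hv), map_neg, inner_neg_right, inner_neg_right]
        ring
      rw [this, norm_neg, ht, neg_div]
    linarith
  -- Lower bound: ‖e z‖ ≤ R z
  have hlow : ∀ z : ℝ, ‖wh z - P z‖ ≤ R z := by
    intro z
    by_cases h0 : wh z - P z = 0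
    · rw [h0, norm_zero]; exact hRnonneg z
    · set v := wh z - P z with hv
      have hvpos : (0 : ℝ) < ‖v‖ := norm_pos_iff.mpr h0
      have hmemS : (F v - a z (P z) v) / ‖v‖ ∈
          {t : ℝ | ∃ u ∈ Vh, u ≠ 0 ∧ t = (F u - a z (P z) u) / ‖u‖} :=
        ⟨v, hmem z, h0, rfl⟩
      have hle : (F v - a z (P z) v) / ‖v‖ ≤ R z := (hR z).1 hmemS
      have hnum : ‖v‖ * ‖v‖ ≤ F v - a z (P z) v := by
        rw [hres z v (hmem z), real_inner_self_eq_norm_mul_norm]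
        have h1 : 0 ≤ Real.exp z * ⟪ι v, ι v⟫ :=
          mul_nonneg (Real.exp_pos z).le real_inner_self_nonneg
        linarith
      have : ‖v‖ ≤ (F v - a z (P z) v) / ‖v‖ := by
        rw [le_div_iff₀ hvpos]; exact hnum
      linarith
  -- Upper bound: R z ≤ (1 + CP² exp z) ‖e z‖
  have hup : ∀ z : ℝ, R z ≤ (1 + CP ^ 2 * Real.exp z) * ‖wh z - P z‖ := by
    intro z
    refine (hR z).2 ?_
    rintro t ⟨v, hv, hv0, rfl⟩
    have hvpos : (0 : ℝ) < ‖v‖ := norm_pos_iff.mpr hv0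
    rw [div_le_iff₀ hvpos, hres z v hv]
    set e := wh z - P z with he
    have h1 : ⟪e, v⟫ ≤ ‖e‖ * ‖v‖ := real_inner_le_norm e v
    have h2 : ⟪ι e, ι v⟫ ≤ (CP * ‖e‖) * (CP * ‖v‖) := by
      calc ⟪ι e, ι v⟫ ≤ ‖ι e‖ * ‖ι v‖ := real_inner_le_norm _ _
        _ ≤ (CP * ‖e‖) * (CP * ‖v‖) :=
          mul_le_mul (hι e) (hι v) (norm_nonneg _) (by positivity)
    have hez : (0 : ℝ) < Real.exp z := Real.exp_pos z
    nlinarith [hez.le]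
  -- chain
  have h1 : ‖wh y - P y‖ ≤ R y := hlow y
  have h2 : R y ≤ R ystar := hmax y hy
  have h3 : R ystar ≤ (1 + CP ^ 2 * Real.exp ystar) * ‖wh ystar - P ystar‖ := hup ystar
  have h4 : (1 + CP ^ 2 * Real.exp ystar) * ‖wh ystar - P ystar‖ ≤
      (1 + CP ^ 2 * Real.exp q) * ‖wh ystar - P ystar‖ := by
    have hexp : Real.exp ystar ≤ Real.exp q := Real.exp_le_exp.mpr hystar.2
    exact mul_le_mul_of_nonneg_right (by nlinarith [sq_nonneg CP]) (norm_nonneg _)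
  have hpos : (0 : ℝ) < 1 + CP ^ 2 * Real.exp q := by positivity
  rw [inv_mul_le_iff₀ hpos]
  linarith
end

section
/- For every s ∈ (0, 1) and every λ > 0, the improper integral ∫₀^∞ μ^{−s} (μ + λ)^{−1} dμ converges and equals (π / sin(sπ)) · λ^{−s}; equivalently, λ^{−s} = (sin(sπ)/π) ∫₀^∞ μ^{−s} (μ + λ)^{−1} dμ (the scalar Balakrishnan formula). -/
/-!
Substituting `μ = λ x` reduces the integral to `λ = 1`, and `x = t / (1 - t)` turns
`∫₀^∞ x^{-s} (1 + x)⁻¹ dx` into the Beta integral `B(1 - s, s) = Γ(1 - s) Γ(s)`, which equals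
`π / sin (s π)` by the reflection formula.
-/

open MeasureTheory Real Set

lemma Complex.ofReal_rpow_mul_one_sub_rpow {a b t : ℝ} (ht : t ∈ Icc (0 : ℝ) 1) :
    (((t ^ (a - 1) * (1 - t) ^ (b - 1) : ℝ)) : ℂ) =
      (t : ℂ) ^ ((a : ℂ) - 1) * (1 - (t : ℂ)) ^ ((b : ℂ) - 1) := by
  have h1t : 0 ≤ 1 - t := sub_nonneg.2 ht.2
  push_cast [Complex.ofReal_cpow ht.1, Complex.ofReal_cpow h1t]
  rfl

namespace Real

lemma intervalIntegrable_rpow_mul_one_sub_rpow {a b : ℝ} (ha : 0 < a) (hb : 0 < b) :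
    IntervalIntegrable (fun t : ℝ => t ^ (a - 1) * (1 - t) ^ (b - 1)) volume 0 1 := by
  have hc := Complex.betaIntegral_convergent (u := a) (v := b) (by simpa) (by simpa)
  rw [intervalIntegrable_iff_integrableOn_Icc_of_le zero_le_one] at hc ⊢
  have := (hc.congr_fun (fun t ht => (Complex.ofReal_rpow_mul_one_sub_rpow ht).symm)
    measurableSet_Icc).re
  simpa [IntegrableOn] using this

lemma integral_rpow_mul_one_sub_rpow {a b : ℝ} (ha : 0 < a) (hb : 0 < b) :
    ∫ t in (0 : ℝ)..1, t ^ (a - 1) * (1 - t) ^ (b - 1) = Gamma a * Gamma b / Gamma (a + b) := by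
  have hβ := Complex.betaIntegral_eq_Gamma_mul_div a b (by simpa) (by simpa)
  rw [Complex.betaIntegral, ← intervalIntegral.integral_congr
    (fun t ht => Complex.ofReal_rpow_mul_one_sub_rpow (uIcc_of_le (zero_le_one' ℝ) ▸ ht)),
    intervalIntegral.integral_ofReal, ← Complex.ofReal_add, Complex.Gamma_ofReal,
    Complex.Gamma_ofReal, Complex.Gamma_ofReal] at hβ
  exact_mod_cast hβ

end Real

lemma image_div_one_sub_Ioo : (fun t : ℝ => t / (1 - t)) '' Ioo 0 1 = Ioi 0 := by
  ext x
  constructor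
  · rintro ⟨t, ⟨ht0, ht1⟩, rfl⟩
    exact div_pos ht0 (sub_pos.2 ht1)
  · intro hx
    have hx : 0 < x := hx
    refine ⟨x / (1 + x), ⟨by positivity, (div_lt_one (by positivity)).2 (by linarith)⟩, ?_⟩
    field_simp
    ring

lemma injOn_div_one_sub : InjOn (fun t : ℝ => t / (1 - t)) (Iio 1) := by
  intro a ha b hb hab
  have ha : 1 - a ≠ 0 := (sub_pos.2 ha).ne'
  have hb : 1 - b ≠ 0 := (sub_pos.2 hb).ne'
  field_simp at hab
  linarith

lemma hasDerivAt_div_one_sub {t : ℝ} (ht : t ≠ 1) :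
    HasDerivAt (fun t : ℝ => t / (1 - t)) ((1 - t) ^ 2)⁻¹ t := by
  refine ((hasDerivAt_id' t).div ((hasDerivAt_id' t).const_sub 1)
    (sub_ne_zero.2 ht.symm)).congr_deriv ?_
  ring

variable {E : Type*} [NormedAddCommGroup E] [NormedSpace ℝ E]

theorem integrableOn_Ioi_iff_integrableOn_Ioo_comp_div_one_sub (f : ℝ → E) :
    IntegrableOn f (Ioi 0) ↔
      IntegrableOn (fun t : ℝ => ((1 - t) ^ 2)⁻¹ • f (t / (1 - t))) (Ioo 0 1) := by
  rw [← image_div_one_sub_Ioo, integrableOn_image_iff_integrableOn_abs_deriv_smul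
    measurableSet_Ioo (fun t ht => (hasDerivAt_div_one_sub ht.2.ne).hasDerivWithinAt)
    (injOn_div_one_sub.mono Ioo_subset_Iio_self)]
  simp only [abs_inv, abs_sq]

theorem integral_Ioi_eq_integral_Ioo_comp_div_one_sub (f : ℝ → E) :
    ∫ x in Ioi 0, f x = ∫ t in Ioo 0 1, ((1 - t) ^ 2)⁻¹ • f (t / (1 - t)) := by
  rw [← image_div_one_sub_Ioo, integral_image_eq_integral_abs_deriv_smul
    measurableSet_Ioo (fun t ht => (hasDerivAt_div_one_sub ht.2.ne).hasDerivWithinAt)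
    (injOn_div_one_sub.mono Ioo_subset_Iio_self)]
  simp only [abs_inv, abs_sq]

lemma inv_sq_mul_rpow_neg_mul_inv_one_add {s t : ℝ} (ht : t ∈ Ioo (0 : ℝ) 1) :
    ((1 - t) ^ 2)⁻¹ * ((t / (1 - t)) ^ (-s) * (1 + t / (1 - t))⁻¹) =
      t ^ ((1 - s) - 1) * (1 - t) ^ (s - 1) := by
  have h1t : 0 < 1 - t := sub_pos.2 ht.2
  rw [div_rpow ht.1.le h1t.le, rpow_sub h1t, rpow_neg h1t.le, rpow_one, sub_sub_cancel_left]
  field_simp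
  ring

variable {s : ℝ}

theorem integrableOn_rpow_neg_mul_inv_one_add (hs0 : 0 < s) (hs1 : s < 1) :
    IntegrableOn (fun x : ℝ => x ^ (-s) * (1 + x)⁻¹) (Ioi 0) := by
  simp only [integrableOn_Ioi_iff_integrableOn_Ioo_comp_div_one_sub, smul_eq_mul]
  refine IntegrableOn.congr_fun ?_
    (fun t ht => (inv_sq_mul_rpow_neg_mul_inv_one_add ht).symm) measurableSet_Ioo
  exact (intervalIntegrable_iff_integrableOn_Ioo_of_le zero_le_one).1
    (intervalIntegrable_rpow_mul_one_sub_rpow (by linarith) hs0)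

theorem integral_rpow_neg_mul_inv_one_add (hs0 : 0 < s) (hs1 : s < 1) :
    ∫ x in Ioi 0, x ^ (-s) * (1 + x)⁻¹ = π / sin (s * π) := by
  simp only [integral_Ioi_eq_integral_Ioo_comp_div_one_sub, smul_eq_mul]
  rw [setIntegral_congr_fun measurableSet_Ioo
      (fun t ht => inv_sq_mul_rpow_neg_mul_inv_one_add (s := s) ht),
    ← integral_Ioc_eq_integral_Ioo, ← intervalIntegral.integral_of_le zero_le_one,
    integral_rpow_mul_one_sub_rpow (by linarith) hs0, sub_add_cancel, Gamma_one, div_one,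
    mul_comm, Gamma_mul_Gamma_one_sub, mul_comm]

variable {lam : ℝ}

lemma rpow_neg_mul_inv_add_comp_mul (hlam : 0 < lam) {x : ℝ} (hx : 0 ≤ x) :
    (lam * x) ^ (-s) * (lam * x + lam)⁻¹ = lam ^ (-s) * lam⁻¹ * (x ^ (-s) * (1 + x)⁻¹) := by
  rw [mul_rpow hlam.le hx, show lam * x + lam = lam * (1 + x) by ring, mul_inv]
  ring

theorem integrableOn_rpow_neg_mul_inv_add_iff (hlam : 0 < lam) :
    IntegrableOn (fun μ : ℝ => μ ^ (-s) * (μ + lam)⁻¹) (Ioi 0) ↔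
      IntegrableOn (fun x : ℝ => x ^ (-s) * (1 + x)⁻¹) (Ioi 0) := by
  calc _ ↔ IntegrableOn (fun x : ℝ => (lam * x) ^ (-s) * (lam * x + lam)⁻¹) (Ioi 0) := by
        simpa only [mul_zero] using (integrableOn_Ioi_comp_mul_left_iff
          (fun μ : ℝ => μ ^ (-s) * (μ + lam)⁻¹) 0 hlam).symm
    _ ↔ IntegrableOn (fun x : ℝ => lam ^ (-s) * lam⁻¹ * (x ^ (-s) * (1 + x)⁻¹)) (Ioi 0) :=
        integrableOn_congr_fun (fun x hx => rpow_neg_mul_inv_add_comp_mul hlam (le_of_lt hx))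
          measurableSet_Ioi
    _ ↔ _ := by exact integrable_const_mul_iff (isUnit_iff_ne_zero.2 (by positivity)) _

theorem integral_rpow_neg_mul_inv_add (hlam : 0 < lam) :
    ∫ μ in Ioi 0, μ ^ (-s) * (μ + lam)⁻¹ =
      lam ^ (-s) * ∫ x in Ioi 0, x ^ (-s) * (1 + x)⁻¹ := by
  have key := integral_comp_mul_left_Ioi (fun μ : ℝ => μ ^ (-s) * (μ + lam)⁻¹) 0 hlam
  rw [mul_zero, setIntegral_congr_fun measurableSet_Ioi
    (fun x hx => rpow_neg_mul_inv_add_comp_mul hlam (le_of_lt hx)), integral_const_mul,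
    smul_eq_mul, mul_comm (lam ^ (-s)), mul_assoc, mul_right_inj' (inv_ne_zero hlam.ne')] at key
  exact key.symm

/-- The scalar Balakrishnan formula:
`λ^{-s} = (sin(sπ)/π) ∫₀^∞ μ^{-s} (μ+λ)⁻¹ dμ` for `s ∈ (0,1)` and `λ > 0`. -/
theorem stmt_11 (s : ℝ) (hs : s ∈ Set.Ioo (0 : ℝ) 1) (lam : ℝ) (hlam : 0 < lam) :
    IntegrableOn (fun μ : ℝ => μ ^ (-s) * (μ + lam)⁻¹) (Set.Ioi 0) ∧
    ∫ μ in Set.Ioi (0 : ℝ), μ ^ (-s) * (μ + lam)⁻¹ =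
      (Real.pi / Real.sin (s * Real.pi)) * lam ^ (-s) := by
  obtain ⟨hs0, hs1⟩ := hs
  refine ⟨(integrableOn_rpow_neg_mul_inv_add_iff hlam).2
    (integrableOn_rpow_neg_mul_inv_one_add hs0 hs1), ?_⟩
  rw [integral_rpow_neg_mul_inv_add hlam, integral_rpow_neg_mul_inv_one_add hs0 hs1, mul_comm]
end
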